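/- A problem f :⊆ ℕ^ℕ ⇉ ℕ^ℕ is computably discontinuous if and only if Player I has a computable winning strategy in the Wadge game of f (i.e., a winning strategy σ : List (List ℕ) → List ℕ that is a computable function in the standard sense via encodings). -/

import Mathlib

/-!
From a computable approximation `h` of a discontinuity function `D`, Player I builds out of
Player II's moves `y₀ y₁ ⋯` a code `q` whose `j`-th entry maps `h(q₀ ⋯ q_{j-1})` to `y₀ ⋯ y_j`,
and plays `D q` along the way: `h` only needs the entries of `q` written so far. If Player II's
play is infinite then it is `Φ_q(D q)`, which is not a solution of `D q`.

Conversely, from a computable winning strategy `σ` of Player I, `D q` is Player I's play against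
the Player II who follows `Φ_q`: in round `n` Player II extends its output towards the longest
output word of an entry `q_j`, `j ≤ n`, whose input word is a prefix of Player I's play. For a
consistent code these words form a chain, so whenever `Φ_q(D q)` is defined it is Player II's
play, which is not a solution of `D q` because `σ` wins.
-/

noncomputable section

/-- Baire space `ℕ^ℕ`. -/
abbrev Baire : Type := ℕ → ℕ

/-- The Cantor pairing `⟨n,k⟩ = (n+k)(n+k+1)/2 + k`. -/
def cpair (n k : ℕ) : ℕ := (n + k) * (n + k + 1) / 2 + k

/-- The inverse of the Cantor pairing. -/
noncomputable def cunpair (m : ℕ) : ℕ × ℕ :=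
  Classical.epsilon fun x : ℕ × ℕ => cpair x.1 x.2 = m

/-- A fixed bijective numbering `w : ℕ → List ℕ` of finite words. -/
def word (n : ℕ) : List ℕ := Denumerable.ofNat (List ℕ) n

/-- `l` is a finite prefix of the infinite sequence `p`. -/
def IsPrefixOf (l : List ℕ) (p : Baire) : Prop := l = (List.range l.length).map p

/-- Two words are comparable in the prefix order. -/
def WordComparable (u v : List ℕ) : Prop := u <+: v ∨ v <+: u

/-- The word `w(n_i)` decoded from the `i`-th entry of the code `q`. -/
noncomputable def wn (q : Baire) (i : ℕ) : List ℕ := word (cunpair (q i)).1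

/-- The word `w(k_i)` decoded from the `i`-th entry of the code `q`. -/
noncomputable def wk (q : Baire) (i : ℕ) : List ℕ := word (cunpair (q i)).2

/-- The code `q` is consistent. -/
def ConsistentCode (q : Baire) : Prop :=
  ∀ i j, WordComparable (wn q i) (wn q j) → WordComparable (wk q i) (wk q j)

/-- The continuous partial function `Φ_q :⊆ ℕ^ℕ → ℕ^ℕ` coded by `q`. -/
noncomputable def Phi (q : Baire) : Baire →. Baire := fun p =>
  ⟨ConsistentCode q ∧ ∀ m : ℕ, ∃ i, IsPrefixOf (wn q i) p ∧ m < (wk q i).length,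
   fun _ => Classical.epsilon fun x : Baire =>
      ∀ i, IsPrefixOf (wn q i) p → IsPrefixOf (wk q i) x⟩

/-- The pairing `⟨q,p⟩` on Baire space. -/
def bpair (q p : Baire) : Baire := fun n => if n % 2 = 0 then q (n / 2) else p (n / 2)

/-- Even part of a sequence. -/
def evens (r : Baire) : Baire := fun n => r (2 * n)

/-- Odd part of a sequence. -/
def odds (r : Baire) : Baire := fun n => r (2 * n + 1)

/-- The universal function `U(⟨q,p⟩) = Φ_q(p)`. -/
noncomputable def U : Baire →. Baire := fun r => Phi (evens r) (odds r)

/-- `h` is monotone for the prefix order. -/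
def MonotoneWord (h : List ℕ → List ℕ) : Prop := ∀ u v, u <+: v → h u <+: h v

/-- `h` approximates the partial function `F`. -/
def Approximates (h : List ℕ → List ℕ) (F : Baire →. Baire) : Prop :=
  ∀ p, ∀ hp : (F p).Dom,
    (∀ v, IsPrefixOf v p → IsPrefixOf (h v) ((F p).get hp)) ∧
    (∀ m : ℕ, ∃ v, IsPrefixOf v p ∧ m < (h v).length)

/-- `F :⊆ ℕ^ℕ → ℕ^ℕ` is continuous: some monotone word function approximates it. -/
def ContinuousPF (F : Baire →. Baire) : Prop := ∃ h, MonotoneWord h ∧ Approximates h F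

/-- `F :⊆ ℕ^ℕ → ℕ^ℕ` is computable: some computable monotone word function approximates it. -/
def ComputablePF (F : Baire →. Baire) : Prop :=
  ∃ h, Computable h ∧ MonotoneWord h ∧ Approximates h F

/-- A total function is computable iff it is computable as a partial function with full domain. -/
def ComputableTotal (F : Baire → Baire) : Prop := ComputablePF fun p => Part.some (F p)

/-- A problem (multivalued function on Baire space). -/
abbrev Problem : Type := Baire → Set Baire

/-- `F` is a realizer of the problem `f`. -/
def Realizes (F : Baire →. Baire) (f : Problem) : Prop :=
  ∀ p, (f p).Nonempty → ∃ h : (F p).Dom, (F p).get h ∈ f p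

/-- `f` is continuous: it has a continuous realizer. -/
def ContinuousProblem (f : Problem) : Prop := ∃ F, ContinuousPF F ∧ Realizes F f

/-- The discontinuity problem `DIS`. -/
noncomputable def DIS : Problem := fun p => {q | q ∉ U p}

/-- `D` is a discontinuity function for `f`. -/
def DiscontinuityFunction (D : Baire → Baire) (f : Problem) : Prop :=
  ∀ q, (f (D q)).Nonempty ∧ ∀ y ∈ Phi q (D q), y ∉ f (D q)

/-- `f` is computably discontinuous. -/
def ComputablyDiscontinuous (f : Problem) : Prop :=
  ∃ D, ComputableTotal D ∧ DiscontinuityFunction D f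

/-- `f` is effectively discontinuous. -/
def EffectivelyDiscontinuous (f : Problem) : Prop :=
  ∃ D : Baire → Baire, Continuous D ∧ DiscontinuityFunction D f

/-- Weihrauch reducibility `f ≤_W g`. -/
def WeihrauchRed (f g : Problem) : Prop :=
  ∃ H K : Baire →. Baire, ComputablePF H ∧ ComputablePF K ∧
    ∀ G : Baire →. Baire, Realizes G g →
      Realizes (fun p => (K p).bind fun s => (G s).bind fun t => H (bpair p t)) f

/-- Strong Weihrauch reducibility `f ≤_sW g`. -/
def StrongWeihrauchRed (f g : Problem) : Prop :=
  ∃ H K : Baire →. Baire, ComputablePF H ∧ ComputablePF K ∧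
    ∀ G : Baire →. Baire, Realizes G g →
      Realizes (fun p => (K p).bind fun s => (G s).bind fun t => H t) f

/-- Continuous Weihrauch reducibility `f ≤*_W g`. -/
def ContWeihrauchRed (f g : Problem) : Prop :=
  ∃ H K : Baire →. Baire, ContinuousPF H ∧ ContinuousPF K ∧
    ∀ G : Baire →. Baire, Realizes G g →
      Realizes (fun p => (K p).bind fun s => (G s).bind fun t => H (bpair p t)) f

/-- Continuous strong Weihrauch reducibility `f ≤*_sW g`. -/
def ContStrongWeihrauchRed (f g : Problem) : Prop :=
  ∃ H K : Baire →. Baire, ContinuousPF H ∧ ContinuousPF K ∧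
    ∀ G : Baire →. Baire, Realizes G g →
      Realizes (fun p => (K p).bind fun s => (G s).bind fun t => H t) f

/-- Concatenation of the first `n` moves. -/
def concatN (ms : ℕ → List ℕ) (n : ℕ) : List ℕ := ((List.range n).map ms).flatten

/-- The concatenated play is infinite. -/
def PlayInf (ms : ℕ → List ℕ) : Prop := ∀ m : ℕ, ∃ n, m < (concatN ms n).length

/-- The infinite sequence determined by an infinite play. -/
noncomputable def playLim (ms : ℕ → List ℕ) : Baire :=
  Classical.epsilon fun p : Baire => ∀ n, IsPrefixOf (concatN ms n) p

/-- Player II wins the run of the Wadge game of `f` given by the moves `xs` of I and `ys` of II. -/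
def WadgeIIWins (f : Problem) (xs ys : ℕ → List ℕ) : Prop :=
  (PlayInf xs ∧ (f (playLim xs)).Nonempty) → (PlayInf ys ∧ playLim ys ∈ f (playLim xs))

/-- The list of first `n` moves. -/
def histW (xs : ℕ → List ℕ) (n : ℕ) : List (List ℕ) := (List.range n).map xs

/-- `σ` is a winning strategy for Player II in the Wadge game of `f`. -/
def WadgeWinningII (f : Problem) (σ : List (List ℕ) → List ℕ) : Prop :=
  ∀ xs : ℕ → List ℕ, WadgeIIWins f xs fun i => σ (histW xs (i + 1))

/-- `σ` is a winning strategy for Player I in the Wadge game of `f`. -/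
def WadgeWinningI (f : Problem) (σ : List (List ℕ) → List ℕ) : Prop :=
  ∀ ys : ℕ → List ℕ, ¬ WadgeIIWins f (fun i => σ (histW ys i)) ys

/-- The list of first `n` values of a sequence. -/
def histN (x : Baire) (n : ℕ) : List ℕ := (List.range n).map x

/-- Player II wins the run `(x,y)` of the Lipschitz game of `f`. -/
def LipIIWins (f : Problem) (x y : Baire) : Prop := (f x).Nonempty → y ∈ f x

/-- `σ` is a winning strategy for Player II in the Lipschitz game of `f`. -/
def LipWinningII (f : Problem) (σ : List ℕ → ℕ) : Prop :=
  ∀ x : Baire, LipIIWins f x fun i => σ (histN x (i + 1))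

/-- `σ` is a winning strategy for Player I in the Lipschitz game of `f`. -/
def LipWinningI (f : Problem) (σ : List ℕ → ℕ) : Prop :=
  ∀ y : Baire, ¬ LipIIWins f (fun i => σ (histN y i)) y

/-- `σ` is a winning strategy for Player II in the Gale–Stewart game `A`. -/
def GSWinningII (A : Set Baire) (σ : List ℕ → ℕ) : Prop :=
  ∀ x : Baire, bpair x (fun i => σ (histN x (i + 1))) ∈ A

/-- `σ` is a winning strategy for Player I in the Gale–Stewart game `A`. -/
def GSWinningI (A : Set Baire) (σ : List ℕ → ℕ) : Prop :=
  ∀ y : Baire, bpair (fun i => σ (histN y i)) y ∉ A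

/-- The totalization `Tf` of `f`. -/
def Totalization (f : Problem) : Problem := fun p => {q | (f p).Nonempty → q ∈ f p}

/-- The paired graph `⟨graph(Tf)⟩ ⊆ ℕ^ℕ`. -/
def pairedGraph (f : Problem) : Set Baire :=
  {r | ∃ x y : Baire, r = bpair x y ∧ y ∈ Totalization f x}

/-- Domain of the word concatenation map `w*`. -/
def wstarDom (p : Baire) : Prop := PlayInf fun i => word (p i)

/-- The word concatenation map `w* : p ↦ w(p 0) w(p 1) ⋯` (on its domain). -/
noncomputable def wstar (p : Baire) : Baire := playLim fun i => word (p i)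

/-- The problem `f^w = w*⁻¹ ∘ f ∘ w*`. -/
noncomputable def wordLift (f : Problem) : Problem := fun p =>
  {q | wstarDom p ∧ (f (wstar p)).Nonempty ∧ wstarDom q ∧ wstar q ∈ f (wstar p)}

/-- The `i`-th component of a tupled sequence. -/
def tupleComp (p : Baire) (i : ℕ) : Baire := fun n => p (cpair i n)

/-- The parallelization `⟨f⟩` of `f`. -/
def Parallelization (f : Problem) : Problem := fun p =>
  {q | ∀ i, tupleComp q i ∈ f (tupleComp p i)}

/-- Turing reducibility: `p` is computable relative to the oracle `q`. -/
def TuringLe (p q : Baire) : Prop := ∃ F : Baire →. Baire, ComputablePF F ∧ p ∈ F q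

end

section Prefixes

theorem histN_length (p : Baire) (n : ℕ) : (histN p n).length = n := by
  simp [histN]

theorem take_histN (p : Baire) (m n : ℕ) : (histN p n).take m = histN p (min m n) := by
  rw [histN, ← List.map_take, List.take_range, histN]

theorem histN_prefix_histN (p : Baire) {m n : ℕ} (h : m ≤ n) : histN p m <+: histN p n := by
  rw [← Nat.min_eq_left h, ← take_histN]
  exact List.take_prefix _ _

theorem histN_succ (p : Baire) (n : ℕ) : histN p (n + 1) = histN p n ++ [p n] := by
  simp [histN, List.range_succ]

theorem isPrefixOf_histN (p : Baire) (n : ℕ) : IsPrefixOf (histN p n) p := by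
  rw [IsPrefixOf, histN_length]; rfl

theorem IsPrefixOf.eq_histN {l : List ℕ} {p : Baire} (h : IsPrefixOf l p) :
    l = histN p l.length := h

theorem IsPrefixOf.mono {u l : List ℕ} {p : Baire} (hu : u <+: l) (hl : IsPrefixOf l p) :
    IsPrefixOf u p := by
  rw [IsPrefixOf, List.prefix_iff_eq_take.mp hu, hl.eq_histN, take_histN, histN_length,
    Nat.min_eq_left hu.length_le]
  rfl

theorem IsPrefixOf.prefix_of_length_le {u v : List ℕ} {p : Baire} (hu : IsPrefixOf u p)
    (hv : IsPrefixOf v p) (h : u.length ≤ v.length) : u <+: v := by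
  rw [hu.eq_histN, hv.eq_histN]
  exact histN_prefix_histN p h

theorem IsPrefixOf.getElem_eq {l : List ℕ} {p : Baire} (h : IsPrefixOf l p) {k : ℕ}
    (hk : k < l.length) : l[k] = p k := by
  simpa [histN] using List.getElem_of_eq h hk

theorem eq_of_isPrefixOf {p p' : Baire}
    (h : ∀ m, ∃ l : List ℕ, m < l.length ∧ IsPrefixOf l p ∧ IsPrefixOf l p') : p = p' := by
  funext m
  obtain ⟨l, hm, hp, hp'⟩ := h m
  rw [← hp.getElem_eq hm, hp'.getElem_eq hm]

end Prefixes

section Plays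

theorem concatN_succ (ms : ℕ → List ℕ) (n : ℕ) :
    concatN ms (n + 1) = concatN ms n ++ ms n := by
  simp [concatN, List.range_succ]

theorem histW_succ (ms : ℕ → List ℕ) (n : ℕ) : histW ms (n + 1) = histW ms n ++ [ms n] := by
  simp [histW, List.range_succ]

theorem histW_length (ms : ℕ → List ℕ) (n : ℕ) : (histW ms n).length = n := by
  simp [histW]

theorem flatten_histW (ms : ℕ → List ℕ) (n : ℕ) : (histW ms n).flatten = concatN ms n := rfl

theorem take_histW (ms : ℕ → List ℕ) {m n : ℕ} (h : m ≤ n) : (histW ms n).take m = histW ms m := by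
  rw [histW, ← List.map_take, List.take_range, Nat.min_eq_left h, histW]

theorem histW_prefix_histW (ms : ℕ → List ℕ) {m n : ℕ} (h : m ≤ n) :
    histW ms m <+: histW ms n := by
  rw [← take_histW ms h]
  exact List.take_prefix _ _

theorem concatN_prefix_concatN (ms : ℕ → List ℕ) {m n : ℕ} (h : m ≤ n) :
    concatN ms m <+: concatN ms n :=
  (histW_prefix_histW ms h).flatten

theorem exists_forall_isPrefixOf_concatN (ms : ℕ → List ℕ) :
    ∃ p : Baire, ∀ n, IsPrefixOf (concatN ms n) p := by
  classical
  refine ⟨fun k => if h : ∃ n, k < (concatN ms n).length then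
      (concatN ms h.choose)[k]'h.choose_spec else 0, fun n => ?_⟩
  refine List.ext_getElem (by simp) fun k hk _ => ?_
  have hex : ∃ n, k < (concatN ms n).length := ⟨n, hk⟩
  simp only [List.getElem_map, List.getElem_range, dif_pos hex]
  rcases Nat.le_total hex.choose n with h | h
  · exact ((concatN_prefix_concatN ms h).getElem hex.choose_spec).symm
  · exact (concatN_prefix_concatN ms h).getElem hk

theorem isPrefixOf_playLim (ms : ℕ → List ℕ) (n : ℕ) : IsPrefixOf (concatN ms n) (playLim ms) :=
  Classical.epsilon_spec (exists_forall_isPrefixOf_concatN ms) n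

theorem PlayInf.playLim_eq {ms : ℕ → List ℕ} (hinf : PlayInf ms) {p : Baire}
    (hp : ∀ n, IsPrefixOf (concatN ms n) p) : playLim ms = p :=
  eq_of_isPrefixOf fun m =>
    let ⟨n, hn⟩ := hinf m
    ⟨concatN ms n, hn, isPrefixOf_playLim ms n, hp n⟩

theorem PlayInf.exists_prefix_concatN {ms : ℕ → List ℕ} (hinf : PlayInf ms) {u : List ℕ}
    (hu : IsPrefixOf u (playLim ms)) (j : ℕ) : ∃ n, j ≤ n ∧ u <+: concatN ms n := by
  obtain ⟨n, hn⟩ := hinf u.length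
  refine ⟨max j n, le_max_left _ _, hu.prefix_of_length_le (isPrefixOf_playLim ms _) ?_⟩
  exact hn.le.trans (concatN_prefix_concatN ms (le_max_right _ _)).length_le

end Plays

theorem mem_Phi {q p z : Baire} (hd : (Phi q p).Dom)
    (hz : ∀ i, IsPrefixOf (wn q i) p → IsPrefixOf (wk q i) z) : z ∈ Phi q p := by
  refine ⟨hd, eq_of_isPrefixOf fun m => ?_⟩
  obtain ⟨i, hi, hm⟩ := hd.2 m
  exact ⟨wk q i, hm, Classical.epsilon_spec (p := fun x : Baire =>
    ∀ i, IsPrefixOf (wn q i) p → IsPrefixOf (wk q i) x) ⟨z, hz⟩ i hi, hz i hi⟩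

theorem primrecRel_isPrefix {α : Type*} [Primcodable α] :
    PrimrecRel fun l l' : List α => l <+: l' :=
  (Primrec.eq.comp Primrec.fst (Primrec.list_take.comp (Primrec.list_length.comp Primrec.fst)
    Primrec.snd)).of_eq fun _ => List.prefix_iff_eq_take.symm

section CantorPairing

/-- One step along the enumeration `(0,0), (1,0), (0,1), (2,0), (1,1), (0,2), …`
of `ℕ × ℕ` by the Cantor pairing. -/
def cstep (x : ℕ × ℕ) : ℕ × ℕ := if x.1 = 0 then (x.2 + 1, 0) else (x.1 - 1, x.2 + 1)

theorem cpair_cstep (x : ℕ × ℕ) : cpair (cstep x).1 (cstep x).2 = cpair x.1 x.2 + 1 := by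
  obtain ⟨_ | n, k⟩ := x
  · simp only [cstep, if_true, cpair]
    have : (k + 1 + 0) * (k + 1 + 0 + 1) = (0 + k) * (0 + k + 1) + (k + 1) * 2 := by ring
    rw [this, Nat.add_mul_div_right _ _ two_pos]
    ring
  · simp only [cstep, Nat.add_one_ne_zero, if_false, Nat.add_sub_cancel, cpair]
    rw [show n + (k + 1) = n + 1 + k by ring]
    ring

theorem cpair_iterate_cstep (m : ℕ) :
    cpair (cstep^[m] (0, 0)).1 (cstep^[m] (0, 0)).2 = m := by
  induction m with
  | zero => rfl
  | succ m ih => rw [Function.iterate_succ_apply', cpair_cstep, ih]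

theorem eq_zero_of_cpair_eq_zero {n k : ℕ} (h : cpair n k = 0) : n = 0 ∧ k = 0 := by
  simp only [cpair, Nat.add_eq_zero_iff, Nat.div_eq_zero_iff] at h
  obtain ⟨h | h, rfl⟩ := h
  · omega
  · refine ⟨?_, rfl⟩
    nlinarith

theorem iterate_cstep_cpair (n k : ℕ) : cstep^[cpair n k] (0, 0) = (n, k) := by
  suffices ∀ m n k, cpair n k = m → cstep^[m] (0, 0) = (n, k) from this _ n k rfl
  intro m
  induction m with
  | zero =>
    intro n k h
    obtain ⟨rfl, rfl⟩ := eq_zero_of_cpair_eq_zero h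
    rfl
  | succ m ih =>
    intro n k h
    rw [Function.iterate_succ_apply']
    rcases k with _ | k
    · rcases n with _ | n
      · exact absurd h (by simp [cpair])
      · have hpre := cpair_cstep (0, n)
        simp only [cstep, if_true] at hpre
        rw [ih 0 n (by omega)]
        rfl
    · have hpre := cpair_cstep (n + 1, k)
      simp only [cstep, Nat.add_one_ne_zero, if_false, Nat.add_sub_cancel] at hpre
      rw [ih (n + 1) k (by omega)]
      rfl

theorem cunpair_eq_iterate_cstep (m : ℕ) : cunpair m = cstep^[m] (0, 0) := by
  have hspec : cpair (cunpair m).1 (cunpair m).2 = m :=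
    Classical.epsilon_spec (p := fun x : ℕ × ℕ => cpair x.1 x.2 = m)
      ⟨_, cpair_iterate_cstep m⟩
  conv_rhs => rw [← hspec]
  rw [iterate_cstep_cpair]

theorem cunpair_cpair (n k : ℕ) : cunpair (cpair n k) = (n, k) := by
  rw [cunpair_eq_iterate_cstep, iterate_cstep_cpair]

theorem primrec_cpair : Primrec₂ cpair :=
  Primrec.nat_add.comp₂
    (Primrec.nat_div.comp₂
      (Primrec.nat_mul.comp₂ Primrec.nat_add
        (Primrec.nat_add.comp₂ Primrec.nat_add (Primrec₂.const 1)))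
      (Primrec₂.const 2))
    Primrec₂.right

theorem primrec_cunpair : Primrec cunpair := by
  have hstep : Primrec cstep :=
    Primrec.ite (Primrec.eq.comp Primrec.fst (Primrec.const 0))
      (Primrec.pair (Primrec.succ.comp Primrec.snd) (Primrec.const 0))
      (Primrec.pair (Primrec.pred.comp Primrec.fst) (Primrec.succ.comp Primrec.snd))
  exact (Primrec.nat_iterate Primrec.id (Primrec.const (0, 0)) (hstep.comp Primrec.snd).to₂).of_eq
    fun m => (cunpair_eq_iterate_cstep m).symm

end CantorPairing

section CodeWords

/-- The words `w(n)` and `w(k)` of a code entry `c = ⟨n, k⟩`. -/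
noncomputable def inWord (c : ℕ) : List ℕ := word (cunpair c).1

noncomputable def outWord (c : ℕ) : List ℕ := word (cunpair c).2

theorem inWord_cpair_encode (u v : List ℕ) :
    inWord (cpair (Encodable.encode u) (Encodable.encode v)) = u := by
  rw [inWord, cunpair_cpair]
  exact Denumerable.ofNat_encode u

theorem outWord_cpair_encode (u v : List ℕ) :
    outWord (cpair (Encodable.encode u) (Encodable.encode v)) = v := by
  rw [outWord, cunpair_cpair]
  exact Denumerable.ofNat_encode v

theorem primrec_inWord : Primrec inWord :=
  (Primrec.ofNat (List ℕ)).comp (Primrec.fst.comp primrec_cunpair)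

theorem primrec_outWord : Primrec outWord :=
  (Primrec.ofNat (List ℕ)).comp (Primrec.snd.comp primrec_cunpair)

end CodeWords

section Forward

variable (h : List ℕ → List ℕ)

/-- The code list `[c₀, …, c_{n-1}]` with `c_j = ⟨h(c₀ ⋯ c_{j-1}), Y(j+1)⟩`: each entry maps the
approximation of `D` at this very code that Player I has played so far to Player II's output. -/
def codeList (Y : ℕ → List ℕ) : ℕ → List ℕ
  | 0 => []
  | n + 1 => codeList Y n ++
      [cpair (Encodable.encode (h (codeList Y n))) (Encodable.encode (Y (n + 1)))]

/-- Player I plays the increments of `h` along the code built from Player II's moves; in round 0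
nothing has been played yet, so the whole of `h []` is played. -/
def strategyOfApprox (l : List (List ℕ)) : List ℕ :=
  let c := codeList h fun k => (l.take k).flatten
  (h (c l.length)).drop (match l.length with | 0 => 0 | n + 1 => (h (c n)).length)

theorem codeList_congr {Y Y' : ℕ → List ℕ} {n : ℕ} (hY : ∀ k ≤ n, Y k = Y' k) :
    codeList h Y n = codeList h Y' n := by
  induction n with
  | zero => rfl
  | succ n ih => rw [codeList, codeList, ih fun k hk => hY k (by omega), hY (n + 1) le_rfl]

def runCode (ys : ℕ → List ℕ) : Baire := fun j =>
  cpair (Encodable.encode (h (codeList h (concatN ys) j))) (Encodable.encode (concatN ys (j + 1)))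

variable (ys : ℕ → List ℕ)

theorem histN_runCode (n : ℕ) : histN (runCode h ys) n = codeList h (concatN ys) n := by
  induction n with
  | zero => rfl
  | succ n ih => rw [histN_succ, ih, codeList, runCode]

theorem codeList_histW {m n : ℕ} (hn : n ≤ m) :
    codeList h (fun k => ((histW ys m).take k).flatten) n = histN (runCode h ys) n := by
  rw [histN_runCode]
  exact codeList_congr h fun k hk => by rw [take_histW ys (hk.trans hn), flatten_histW]

theorem wn_runCode (j : ℕ) : wn (runCode h ys) j = h (histN (runCode h ys) j) := by
  rw [histN_runCode]
  exact inWord_cpair_encode _ _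

theorem wk_runCode (j : ℕ) : wk (runCode h ys) j = concatN ys (j + 1) :=
  outWord_cpair_encode _ _

variable {h}

theorem concatN_strategyOfApprox (hm : MonotoneWord h) (n : ℕ) :
    concatN (fun i => strategyOfApprox h (histW ys i)) (n + 1) = h (histN (runCode h ys) n) := by
  have hmove : ∀ n, strategyOfApprox h (histW ys n) = (h (histN (runCode h ys) n)).drop
      (match n with | 0 => 0 | m + 1 => (h (histN (runCode h ys) m)).length) := by
    intro n
    simp only [strategyOfApprox, histW_length, codeList_histW h ys le_rfl]
    rcases n with _ | m
    · rfl
    · simp only [codeList_histW h ys (Nat.le_succ m)]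
  induction n with
  | zero => simp [concatN, hmove 0]
  | succ n ih =>
    rw [concatN_succ, ih, hmove]
    exact List.prefix_iff_eq_append.mp (hm _ _ (histN_prefix_histN _ (Nat.le_succ n)))

theorem wadgeWinningI_strategyOfApprox {f : Problem} {D : Baire → Baire}
    (hm : MonotoneWord h) (ha : Approximates h fun p => Part.some (D p))
    (hD : DiscontinuityFunction D f) : WadgeWinningI f (strategyOfApprox h) := by
  intro ys hII
  set q := runCode h ys
  set xs := fun i => strategyOfApprox h (histW ys i)
  have hx : ∀ n, concatN xs (n + 1) = h (histN q n) := concatN_strategyOfApprox ys hm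
  obtain ⟨happrox, hunbounded⟩ := ha q trivial
  have hxinf : PlayInf xs := fun m =>
    let ⟨v, hv, hmv⟩ := hunbounded m
    ⟨v.length + 1, by rwa [hx, ← hv.eq_histN]⟩
  have hDq : playLim xs = D q := hxinf.playLim_eq fun
    | 0 => rfl
    | n + 1 => hx n ▸ happrox _ (isPrefixOf_histN q n)
  obtain ⟨hyinf, hy⟩ := hII ⟨hxinf, hDq ▸ (hD q).1⟩
  have hdom : (Phi q (D q)).Dom := by
    refine ⟨fun i j _ => ?_, fun m => ?_⟩
    · rw [WordComparable, wk_runCode, wk_runCode]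
      rcases Nat.le_total i j with hij | hij
      · exact Or.inl (concatN_prefix_concatN ys (by omega))
      · exact Or.inr (concatN_prefix_concatN ys (by omega))
    · obtain ⟨n, hn⟩ := hyinf m
      refine ⟨n, ?_, ?_⟩
      · rw [wn_runCode, ← hx, hDq.symm]
        exact isPrefixOf_playLim xs (n + 1)
      · rw [wk_runCode]
        exact hn.trans_le (concatN_prefix_concatN ys (Nat.le_succ n)).length_le
  refine (hD q).2 (playLim ys) (mem_Phi hdom fun i _ => ?_) (hDq ▸ hy)
  rw [wk_runCode]
  exact isPrefixOf_playLim ys (i + 1)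

theorem computable_strategyOfApprox (hc : Computable h) : Computable (strategyOfApprox h) := by
  have hcode : Computable₂ fun (l : List (List ℕ)) n =>
      codeList h (fun k => (l.take k).flatten) n := by
    have hstep : Computable₂ fun (l : List (List ℕ) × ℕ) (x : ℕ × List ℕ) =>
        x.2 ++ [cpair (Encodable.encode (h x.2))
          (Encodable.encode ((l.1.take (x.1 + 1)).flatten))] :=
      (Primrec.list_concat.to_comp.comp (Computable.snd.comp Computable.snd)
        (primrec_cpair.to_comp.comp
          (Computable.encode.comp (hc.comp (Computable.snd.comp Computable.snd)))
          (Computable.encode.comp (Primrec.list_flatten.to_comp.comp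
            (Primrec.list_take.to_comp.comp (Computable.succ.comp
              (Computable.fst.comp Computable.snd)) (Computable.fst.comp Computable.fst)))))).to₂
    refine (Computable.nat_rec Computable.snd (Computable.const []) hstep).of_eq fun p => ?_
    induction p.2 with
    | zero => rfl
    | succ n ih => simp only [codeList, ih]
  have hlen : Computable fun l : List (List ℕ) => l.length := Primrec.list_length.to_comp
  have hprev : Computable fun l : List (List ℕ) => Nat.casesOn (motive := fun _ => ℕ) l.length 0
      fun n => (h (codeList h (fun k => (l.take k).flatten) n)).length :=
    Computable.nat_casesOn hlen (Computable.const 0)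
      (Primrec.list_length.to_comp.comp (hc.comp hcode)).to₂
  refine (Primrec.list_drop.to_comp.comp hprev (hc.comp (hcode.comp Computable.id hlen))).of_eq
    fun l => ?_
  simp only [strategyOfApprox]
  rcases l.length with _ | n <;> rfl

end Forward

section Play

variable (σ : List (List ℕ) → List ℕ) (τ : List (List ℕ) → List (List ℕ) → List ℕ)

/-- A round of the Wadge game on the pair of histories; Player II's answer `τ` sees both. -/
def playRound (H : List (List ℕ) × List (List ℕ)) : List (List ℕ) × List (List ℕ) :=
  (H.1 ++ [σ H.2], H.2 ++ [τ (H.1 ++ [σ H.2]) H.2])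

def play (n : ℕ) : List (List ℕ) × List (List ℕ) := (playRound σ τ)^[n] ([], [])

def playII (n : ℕ) : List ℕ := (play σ τ (n + 1)).2.getD n []

theorem play_succ (n : ℕ) : play σ τ (n + 1) = playRound σ τ (play σ τ n) :=
  Function.iterate_succ_apply' _ _ _

theorem play_eq_histW (n : ℕ) :
    play σ τ n = (histW (fun i => σ (histW (playII σ τ) i)) n, histW (playII σ τ) n) := by
  induction n with
  | zero => rfl
  | succ n ih =>
    have hy : playII σ τ n =
        τ (histW (fun i => σ (histW (playII σ τ) i)) n ++ [σ (histW (playII σ τ) n)])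
          (histW (playII σ τ) n) := by
      rw [playII, play_succ, ih]
      simp [playRound, histW_length]
    rw [play_succ, ih, playRound, histW_succ, histW_succ, ← hy]

theorem playII_eq (n : ℕ) :
    playII σ τ n =
      τ (histW (fun i => σ (histW (playII σ τ) i)) (n + 1)) (histW (playII σ τ) n) := by
  conv_lhs => rw [playII, play_succ, play_eq_histW]
  simp [playRound, histW_succ, histW_length]

theorem play_congr {τ' : List (List ℕ) → List (List ℕ) → List ℕ} {n : ℕ}
    (hτ : ∀ Xh Yh, Yh.length < n → τ Xh Yh = τ' Xh Yh) : play σ τ n = play σ τ' n := by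
  induction n with
  | zero => rfl
  | succ n ih =>
    rw [play_succ, play_succ, ih fun Xh Yh h => hτ Xh Yh (by omega), playRound, playRound,
      hτ _ _ (by rw [play_eq_histW, histW_length]; omega)]

end Play

theorem computable_play {α : Type*} [Primcodable α] {σ : List (List ℕ) → List ℕ}
    (hσ : Computable σ) {τ : α → List (List ℕ) → List (List ℕ) → List ℕ}
    (hτ : Computable fun x : α × List (List ℕ) × List (List ℕ) => τ x.1 x.2.1 x.2.2) :
    Computable₂ fun a n => play σ (τ a) n := by
  have hround : Computable fun x : α × List (List ℕ) × List (List ℕ) =>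
      playRound σ (τ x.1) x.2 := by
    have hX : Computable fun x : α × List (List ℕ) × List (List ℕ) => x.2.1 ++ [σ x.2.2] :=
      Primrec.list_concat.to_comp.comp (Computable.fst.comp Computable.snd)
        (hσ.comp (Computable.snd.comp Computable.snd))
    exact hX.pair (Primrec.list_concat.to_comp.comp (Computable.snd.comp Computable.snd)
      (hτ.comp (Computable.fst.pair (hX.pair (Computable.snd.comp Computable.snd)))))
  refine (Computable.nat_rec Computable.snd (Computable.const ([], []))
    (hround.comp ((Computable.fst.comp Computable.fst).pair
      (Computable.snd.comp Computable.snd))).to₂).of_eq fun p => ?_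
  induction p.2 with
  | zero => rfl
  | succ n ih => exact (congrArg (playRound σ (τ p.1)) ih).trans (play_succ σ _ n).symm

section Backward

/-- The longest output word of an entry of `cs` whose input word is a prefix of `X`. -/
noncomputable def bestOutput (X : List ℕ) (cs : List ℕ) : List ℕ :=
  cs.foldr (fun c K => if inWord c <+: X ∧ K.length < (outWord c).length then outWord c else K) []

theorem bestOutput_cons (X : List ℕ) (c : ℕ) (cs : List ℕ) :
    bestOutput X (c :: cs) = if inWord c <+: X ∧ (bestOutput X cs).length < (outWord c).length
      then outWord c else bestOutput X cs := rfl

theorem bestOutput_eq_nil_or (X cs : List ℕ) :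
    bestOutput X cs = [] ∨ ∃ c ∈ cs, inWord c <+: X ∧ bestOutput X cs = outWord c := by
  induction cs with
  | nil => exact Or.inl rfl
  | cons c cs ih =>
    rw [bestOutput_cons]
    split_ifs with hc
    · exact Or.inr ⟨c, List.mem_cons_self, hc.1, rfl⟩
    · rcases ih with h | ⟨c', hc', hX, h⟩
      · exact Or.inl h
      · exact Or.inr ⟨c', List.mem_cons_of_mem c hc', hX, h⟩

theorem length_outWord_le_bestOutput {X cs : List ℕ} {c : ℕ} (hc : c ∈ cs) (hX : inWord c <+: X) :
    (outWord c).length ≤ (bestOutput X cs).length := by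
  induction cs with
  | nil => simp at hc
  | cons c' cs ih =>
    rw [bestOutput_cons]
    rcases List.mem_cons.mp hc with rfl | hc
    · split_ifs with h
      · exact le_rfl
      · exact not_lt.mp fun hlt => h ⟨hX, hlt⟩
    · split_ifs with h
      · exact (ih hc).trans h.2.le
      · exact ih hc

def ConsistentCodes (cs : List ℕ) : Prop :=
  ∀ c ∈ cs, ∀ c' ∈ cs, WordComparable (inWord c) (inWord c') →
    WordComparable (outWord c) (outWord c')

theorem ConsistentCode.consistentCodes_histN {q : Baire} (hq : ConsistentCode q) (n : ℕ) :
    ConsistentCodes (histN q n) := by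
  simp only [ConsistentCodes, histN, List.mem_map, forall_exists_index, and_imp]
  rintro _ i - rfl _ j - rfl
  exact hq i j

theorem outWord_prefix_bestOutput {X cs : List ℕ} {c : ℕ} (hcs : ConsistentCodes cs)
    (hc : c ∈ cs) (hX : inWord c <+: X) : outWord c <+: bestOutput X cs := by
  have hle := length_outWord_le_bestOutput hc hX
  rcases bestOutput_eq_nil_or X cs with h | ⟨c', hc', hX', h⟩
  · rw [h, List.length_nil, Nat.le_zero, List.length_eq_zero_iff] at hle
    rw [hle]
    exact List.nil_prefix
  · rw [h] at hle ⊢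
    rcases hcs c hc c' hc' (List.prefix_or_prefix_of_prefix hX hX') with h' | h'
    · exact h'
    · rw [h'.eq_of_length_le hle]

noncomputable def followOutput (cs X Y : List ℕ) : List ℕ :=
  if Y <+: bestOutput X cs then (bestOutput X cs).drop Y.length else []

/-- `Yh.length` is the round `n`; Player II consults the code entries `C (n + 1)`. -/
noncomputable def followStrategy (C : ℕ → List ℕ) (Xh Yh : List (List ℕ)) : List ℕ :=
  followOutput (C (Yh.length + 1)) Xh.flatten Yh.flatten

variable (σ : List (List ℕ) → List ℕ)

noncomputable def discontinuityOf (q : Baire) : Baire :=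
  playLim fun i => σ (histW (playII σ (followStrategy (histN q))) i)

noncomputable def approxOf (v : List ℕ) : List ℕ :=
  (play σ (followStrategy fun k => v.take k) v.length).1.flatten

section Run

variable (q : Baire)

local notation "ys" => playII σ (followStrategy (histN q))
local notation "xs" => fun i => σ (histW ys i)

theorem approxOf_histN (n : ℕ) : approxOf σ (histN q n) = concatN xs n := by
  have hplay : play σ (followStrategy fun k => (histN q n).take k) n =
      play σ (followStrategy (histN q)) n :=
    play_congr σ _ fun Xh Yh h => by
      rw [followStrategy, followStrategy, take_histN, Nat.min_eq_left (by omega)]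
  rw [approxOf, histN_length, hplay, play_eq_histW, flatten_histW]

theorem concatN_playII_followStrategy (hq : ConsistentCode q) (n : ℕ) :
    concatN ys (n + 1) = bestOutput (concatN xs (n + 1)) (histN q (n + 1)) := by
  have hmono : ∀ n, bestOutput (concatN xs (n + 1)) (histN q (n + 1)) <+:
      bestOutput (concatN xs (n + 2)) (histN q (n + 2)) := by
    intro n
    rcases bestOutput_eq_nil_or (concatN xs (n + 1)) (histN q (n + 1)) with h | ⟨c, hc, hX, h⟩
    · rw [h]
      exact List.nil_prefix
    · rw [h]
      exact outWord_prefix_bestOutput (hq.consistentCodes_histN _)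
        ((histN_prefix_histN q (Nat.le_succ _)).subset hc)
        (hX.trans (concatN_prefix_concatN _ (Nat.le_succ _)))
  have hstep : ∀ n, concatN ys n <+: bestOutput (concatN xs (n + 1)) (histN q (n + 1)) →
      concatN ys (n + 1) = bestOutput (concatN xs (n + 1)) (histN q (n + 1)) := by
    intro n hpre
    rw [concatN_succ, playII_eq, followStrategy, followOutput, histW_length, flatten_histW,
      flatten_histW, if_pos hpre]
    exact List.prefix_iff_eq_append.mp hpre
  induction n with
  | zero => exact hstep 0 List.nil_prefix
  | succ n ih => exact hstep (n + 1) (ih ▸ hmono n)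

end Run

theorem monotoneWord_approxOf : MonotoneWord (approxOf σ) := by
  intro u v huv
  have hplay : play σ (followStrategy fun k => u.take k) u.length =
      play σ (followStrategy fun k => v.take k) u.length :=
    play_congr σ _ fun Xh Yh h => by
      rw [followStrategy, followStrategy, List.prefix_iff_eq_take.mp huv, List.take_take,
        Nat.min_eq_left (by omega)]
  rw [approxOf, approxOf, hplay, play_eq_histW, play_eq_histW]
  exact (histW_prefix_histW _ huv.length_le).flatten

variable {σ}

theorem approximates_approxOf {f : Problem} (hwin : WadgeWinningI f σ) :
    Approximates (approxOf σ) fun q => Part.some (discontinuityOf σ q) := by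
  intro q _
  refine ⟨fun v hv => ?_, fun m => ?_⟩
  · rw [hv.eq_histN, approxOf_histN]
    exact isPrefixOf_playLim _ _
  · obtain ⟨n, hn⟩ := (Classical.not_imp.mp (hwin _)).1.1 m
    exact ⟨histN q n, isPrefixOf_histN q n, by rwa [approxOf_histN]⟩

theorem discontinuityFunction_discontinuityOf {f : Problem} (hwin : WadgeWinningI f σ) :
    DiscontinuityFunction (discontinuityOf σ) f := by
  intro q
  set ys := playII σ (followStrategy (histN q))
  set xs := fun i => σ (histW ys i)
  obtain ⟨⟨hxinf, hne⟩, hlose⟩ := Classical.not_imp.mp (hwin ys)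
  refine ⟨hne, fun y hy hyf => hlose ?_⟩
  have hd : (Phi q (discontinuityOf σ q)).Dom := hy.1
  have hfollow : ∀ j, IsPrefixOf (wn q j) (discontinuityOf σ q) →
      ∃ n, wk q j <+: concatN ys (n + 1) := by
    intro j hj
    obtain ⟨n, hjn, hpre⟩ := hxinf.exists_prefix_concatN hj j
    refine ⟨n, ?_⟩
    rw [concatN_playII_followStrategy σ q hd.1]
    refine outWord_prefix_bestOutput (hd.1.consistentCodes_histN _) ?_
      (hpre.trans (concatN_prefix_concatN _ (Nat.le_succ n)))
    exact List.mem_map.mpr ⟨j, List.mem_range.mpr (by omega), rfl⟩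
  have hyinf : PlayInf ys := fun m =>
    let ⟨i, hi, hm⟩ := hd.2 m
    let ⟨n, hn⟩ := hfollow i hi
    ⟨n + 1, hm.trans_le hn.length_le⟩
  have hmem : playLim ys ∈ Phi q (discontinuityOf σ q) := mem_Phi hd fun i hi =>
    let ⟨n, hn⟩ := hfollow i hi
    (isPrefixOf_playLim ys (n + 1)).mono hn
  obtain rfl := Part.mem_unique hy hmem
  exact ⟨hyinf, hyf⟩

theorem primrec_bestOutput : Primrec₂ bestOutput := by
  have hin : Primrec fun x : (List ℕ × List ℕ) × ℕ × List ℕ => inWord x.2.1 :=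
    primrec_inWord.comp (Primrec.fst.comp Primrec.snd)
  have hout : Primrec fun x : (List ℕ × List ℕ) × ℕ × List ℕ => outWord x.2.1 :=
    primrec_outWord.comp (Primrec.fst.comp Primrec.snd)
  exact Primrec.list_foldr Primrec.snd (Primrec.const [])
    (Primrec.ite ((primrecRel_isPrefix.comp hin (Primrec.fst.comp Primrec.fst)).and
        (Primrec.nat_lt.comp (Primrec.list_length.comp (Primrec.snd.comp Primrec.snd))
          (Primrec.list_length.comp hout)))
      hout (Primrec.snd.comp Primrec.snd)).to₂

theorem primrec_followOutput :
    Primrec fun x : List ℕ × List ℕ × List ℕ => followOutput x.1 x.2.1 x.2.2 := by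
  have hbest : Primrec fun x : List ℕ × List ℕ × List ℕ => bestOutput x.2.1 x.1 :=
    primrec_bestOutput.comp (Primrec.fst.comp Primrec.snd) Primrec.fst
  have hY : Primrec fun x : List ℕ × List ℕ × List ℕ => x.2.2 := Primrec.snd.comp Primrec.snd
  exact Primrec.ite (primrecRel_isPrefix.comp hY hbest)
    (Primrec.list_drop.comp (Primrec.list_length.comp hY) hbest) (Primrec.const [])

theorem computable_approxOf (hσ : Computable σ) : Computable (approxOf σ) := by
  have hτ : Computable fun x : List ℕ × List (List ℕ) × List (List ℕ) =>
      followStrategy (fun k => x.1.take k) x.2.1 x.2.2 := by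
    have h1 : Primrec fun x : List ℕ × List (List ℕ) × List (List ℕ) =>
        (x.1.take (x.2.2.length + 1), x.2.1.flatten, x.2.2.flatten) :=
      (Primrec.list_take.comp
        (Primrec.succ.comp (Primrec.list_length.comp (Primrec.snd.comp Primrec.snd)))
        Primrec.fst).pair ((Primrec.list_flatten.comp (Primrec.fst.comp Primrec.snd)).pair
          (Primrec.list_flatten.comp (Primrec.snd.comp Primrec.snd)))
    exact (primrec_followOutput.comp h1).to_comp
  have hplay := computable_play (τ := fun v : List ℕ => followStrategy fun k => v.take k) hσ hτ
  exact Primrec.list_flatten.to_comp.comp (Computable.fst.comp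
    (hplay.comp Computable.id Primrec.list_length.to_comp))

end Backward

/-- `f` is computably discontinuous iff Player I has a computable winning strategy in the
Wadge game of `f`. -/
theorem computably_discontinuous_iff_computable_wadge_winning_I (f : Problem) :
    ComputablyDiscontinuous f ↔
      ∃ σ : List (List ℕ) → List ℕ, Computable σ ∧ WadgeWinningI f σ := by
  constructor
  · rintro ⟨D, ⟨h, hc, hm, ha⟩, hD⟩
    exact ⟨strategyOfApprox h, computable_strategyOfApprox hc,
      wadgeWinningI_strategyOfApprox hm ha hD⟩
  · rintro ⟨σ, hσ, hwin⟩
    exact ⟨discontinuityOf σ, ⟨approxOf σ, computable_approxOf hσ, monotoneWord_approxOf σ,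
      approximates_approxOf hwin⟩, discontinuityFunction_discontinuityOf hwin⟩
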